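/- For all f, g ∈ C¹_poly(ℝⁿ) and every i ∈ {1,…,n}, the Gaussian integration-by-parts formula holds: ∫ f(x) ∂ᵢ g(x) dγ(x) = ∫ δᵢ f(x) g(x) dγ(x), where δᵢ f(x) = xᵢ f(x) − ∂ᵢ f(x) is the i-th divergence (Gaussian adjoint) operator. -/

import Mathlib

open MeasureTheory Real
open scoped RealInnerProductSpace BigOperators

noncomputable section

/-- The standard Gaussian measure on `ℝⁿ`, with density
`(2π)^(-n/2) exp(-|x|²/2)` with respect to Lebesgue measure. -/
def gaussianMeasure (n : ℕ) : Measure (EuclideanSpace ℝ (Fin n)) :=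
  volume.withDensity fun x => ENNReal.ofReal ((2 * π) ^ (-(n : ℝ) / 2) * Real.exp (-‖x‖ ^ 2 / 2))

/-- `C^k_poly(ℝⁿ)`: `C^k` functions which, together with all derivatives up to
order `k`, are bounded by a polynomial. -/
def CPoly (k n : ℕ) (f : EuclideanSpace ℝ (Fin n) → ℝ) : Prop :=
  ContDiff ℝ k f ∧
    ∀ i, i ≤ k → ∃ (C : ℝ) (m : ℕ), ∀ x, ‖iteratedFDeriv ℝ i f x‖ ≤ C * (1 + ‖x‖) ^ m

/-- The `i`-th partial derivative. -/
def partialDeriv {n : ℕ} (i : Fin n) (f : EuclideanSpace ℝ (Fin n) → ℝ)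
    (x : EuclideanSpace ℝ (Fin n)) : ℝ :=
  fderiv ℝ f x (EuclideanSpace.single i 1)

/-- The Laplacian. -/
def laplacian {n : ℕ} (f : EuclideanSpace ℝ (Fin n) → ℝ) (x : EuclideanSpace ℝ (Fin n)) : ℝ :=
  ∑ i : Fin n, partialDeriv i (partialDeriv i f) x

/-- The Ornstein–Uhlenbeck operator `δ·∇ f (x) = x·∇f(x) − Δf(x)`. -/
def ouOperator {n : ℕ} (f : EuclideanSpace ℝ (Fin n) → ℝ) (x : EuclideanSpace ℝ (Fin n)) : ℝ :=
  ⟪x, gradient f x⟫ - laplacian f x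

/-- The Ornstein–Uhlenbeck semigroup given by the Mehler formula. -/
def ouSemigroup (n : ℕ) (t : ℝ) (f : EuclideanSpace ℝ (Fin n) → ℝ)
    (x : EuclideanSpace ℝ (Fin n)) : ℝ :=
  ∫ y, f (Real.exp (-t) • x + Real.sqrt (1 - Real.exp (-2 * t)) • y) ∂gaussianMeasure n

/-- A Young function: the primitive of a continuous, strictly increasing function
`φ` with `φ(0) = 0` and `φ(u) → ∞`. -/
def IsYoung (Φ : ℝ → ℝ) : Prop :=
  ∃ φ : ℝ → ℝ, ContinuousOn φ (Set.Ici 0) ∧ StrictMonoOn φ (Set.Ici 0) ∧ φ 0 = 0 ∧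
    Filter.Tendsto φ Filter.atTop Filter.atTop ∧
    ∀ x, 0 ≤ x → Φ x = ∫ u in (0:ℝ)..x, φ u

/-- The Luxemburg norm of `f` in the Orlicz space `L_Φ(γ)` over the Gaussian space. -/
def luxNorm (n : ℕ) (Φ : ℝ → ℝ) (f : EuclideanSpace ℝ (Fin n) → ℝ) : ℝ :=
  sInf {α : ℝ | 0 < α ∧ ∫ x, Φ (|f x| / α) ∂gaussianMeasure n ≤ 1}

end

/-!
With `w x = exp (-‖x‖² / 2)`, Lebesgue integration by parts gives
`∫ (w f) ∂ᵢg = -∫ ∂ᵢ(w f) g`, and `∂ᵢ(w f) = w (∂ᵢf - xᵢ f)`. All integrals involved are of the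
form `∫ w F` with `F` continuous and polynomially bounded, hence finite, because
`(1 + s)ᵐ exp (-s² / 2) ≤ exp (m²) exp (-s² / 4)`.
-/

def PolyBounded {E G : Type*} [NormedAddCommGroup E] [NormedAddCommGroup G] (F : E → G) : Prop :=
  ∃ (C : ℝ) (m : ℕ), ∀ x, ‖F x‖ ≤ C * (1 + ‖x‖) ^ m

namespace PolyBounded

variable {E G : Type*} [NormedAddCommGroup E] [NormedAddCommGroup G]

lemma sub {F₁ F₂ : E → G} (h₁ : PolyBounded F₁) (h₂ : PolyBounded F₂) :
    PolyBounded (fun x => F₁ x - F₂ x) := by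
  obtain ⟨C₁, m₁, hF₁⟩ := h₁
  obtain ⟨C₂, m₂, hF₂⟩ := h₂
  refine ⟨C₁ + C₂, max m₁ m₂, fun x => ?_⟩
  have hx : 1 ≤ 1 + ‖x‖ := le_add_of_nonneg_right (norm_nonneg x)
  have hC₁ : 0 ≤ C₁ := by simpa using (norm_nonneg _).trans (hF₁ 0)
  have hC₂ : 0 ≤ C₂ := by simpa using (norm_nonneg _).trans (hF₂ 0)
  calc ‖F₁ x - F₂ x‖ ≤ C₁ * (1 + ‖x‖) ^ m₁ + C₂ * (1 + ‖x‖) ^ m₂ :=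
        (norm_sub_le _ _).trans (add_le_add (hF₁ x) (hF₂ x))
    _ ≤ C₁ * (1 + ‖x‖) ^ max m₁ m₂ + C₂ * (1 + ‖x‖) ^ max m₁ m₂ := by
        gcongr
        exacts [le_max_left _ _, le_max_right _ _]
    _ = (C₁ + C₂) * (1 + ‖x‖) ^ max m₁ m₂ := by ring

lemma mul {F₁ F₂ : E → ℝ} (h₁ : PolyBounded F₁) (h₂ : PolyBounded F₂) :
    PolyBounded (fun x => F₁ x * F₂ x) := by
  obtain ⟨C₁, m₁, hF₁⟩ := h₁
  obtain ⟨C₂, m₂, hF₂⟩ := h₂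
  refine ⟨C₁ * C₂, m₁ + m₂, fun x => ?_⟩
  calc ‖F₁ x * F₂ x‖ = ‖F₁ x‖ * ‖F₂ x‖ := norm_mul _ _
    _ ≤ (C₁ * (1 + ‖x‖) ^ m₁) * (C₂ * (1 + ‖x‖) ^ m₂) :=
        mul_le_mul (hF₁ x) (hF₂ x) (norm_nonneg _) ((norm_nonneg _).trans (hF₁ x))
    _ = C₁ * C₂ * (1 + ‖x‖) ^ (m₁ + m₂) := by ring

lemma clm_apply {F : Type*} [NormedAddCommGroup F] [NormedSpace ℝ E] [NormedSpace ℝ F]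
    [NormedSpace ℝ G] {L : E → F →L[ℝ] G} (hL : PolyBounded L) (v : F) :
    PolyBounded (fun x => L x v) := by
  obtain ⟨C, m, hL⟩ := hL
  refine ⟨C * ‖v‖, m, fun x => ?_⟩
  calc ‖L x v‖ ≤ ‖L x‖ * ‖v‖ := (L x).le_opNorm v
    _ ≤ C * (1 + ‖x‖) ^ m * ‖v‖ := by gcongr; exact hL x
    _ = C * ‖v‖ * (1 + ‖x‖) ^ m := by ring

end PolyBounded

lemma polyBounded_inner_right {V : Type*} [NormedAddCommGroup V] [InnerProductSpace ℝ V] (v : V) :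
    PolyBounded (fun x : V => ⟪x, v⟫) := by
  refine ⟨‖v‖, 1, fun x => ?_⟩
  calc ‖⟪x, v⟫‖ ≤ ‖x‖ * ‖v‖ := norm_inner_le_norm x v
    _ ≤ ‖v‖ * (1 + ‖x‖) ^ 1 := by nlinarith [norm_nonneg v]

section Integrability

variable {V : Type*} [NormedAddCommGroup V] [InnerProductSpace ℝ V] [FiniteDimensional ℝ V]
  [MeasurableSpace V] [BorelSpace V]

lemma integrable_exp_neg_mul_sq_norm {b : ℝ} (hb : 0 < b) :
    Integrable (fun x : V => exp (-b * ‖x‖ ^ 2)) := by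
  have h := (GaussianFourier.integrable_cexp_neg_mul_sq_norm_add (V := V) (b := b)
    (by simpa using hb) 0 0).norm
  refine h.congr (.of_forall fun x => ?_)
  simp only [inner_zero_left, Complex.ofReal_zero, mul_zero, add_zero, Complex.norm_exp]
  norm_cast

lemma one_add_pow_mul_exp_neg_sq_le (m : ℕ) {s : ℝ} (hs : 0 ≤ s) :
    (1 + s) ^ m * exp (-s ^ 2 / 2) ≤ exp ((m : ℝ) ^ 2) * exp (-(1 / 4) * s ^ 2) := by
  have hpow : (1 + s) ^ m ≤ exp (m * s) := by
    calc (1 + s) ^ m ≤ exp s ^ m := by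
          gcongr; linarith [add_one_le_exp s]
      _ = exp (m * s) := (exp_nat_mul s m).symm
  calc (1 + s) ^ m * exp (-s ^ 2 / 2) ≤ exp (m * s) * exp (-s ^ 2 / 2) := by gcongr
    _ = exp (m * s - s ^ 2 / 2) := by rw [← exp_add]; ring_nf
    _ ≤ exp ((m : ℝ) ^ 2 + -(1 / 4) * s ^ 2) := by
        gcongr; nlinarith [sq_nonneg (s / 2 - m)]
    _ = _ := exp_add _ _

lemma PolyBounded.integrable_exp_neg_sq_norm_mul {F : V → ℝ} (hF : PolyBounded F)
    (hFm : AEStronglyMeasurable F) : Integrable (fun x => exp (-‖x‖ ^ 2 / 2) * F x) := by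
  obtain ⟨C, m, hF⟩ := hF
  have hC : 0 ≤ C := by simpa using (norm_nonneg _).trans (hF 0)
  refine ((integrable_exp_neg_mul_sq_norm (V := V) (b := 1 / 4) (by norm_num)).const_mul
    (C * exp ((m : ℝ) ^ 2))).mono' ((by fun_prop : Continuous fun x : V =>
      exp (-‖x‖ ^ 2 / 2)).aestronglyMeasurable.mul hFm) (.of_forall fun x => ?_)
  calc ‖exp (-‖x‖ ^ 2 / 2) * F x‖ = exp (-‖x‖ ^ 2 / 2) * ‖F x‖ := by
        rw [norm_mul, Real.norm_of_nonneg (exp_pos _).le]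
    _ ≤ exp (-‖x‖ ^ 2 / 2) * (C * (1 + ‖x‖) ^ m) := by gcongr; exact hF x
    _ = C * ((1 + ‖x‖) ^ m * exp (-‖x‖ ^ 2 / 2)) := by ring
    _ ≤ C * (exp ((m : ℝ) ^ 2) * exp (-(1 / 4) * ‖x‖ ^ 2)) :=
        mul_le_mul_of_nonneg_left (one_add_pow_mul_exp_neg_sq_le m (norm_nonneg x)) hC
    _ = C * exp ((m : ℝ) ^ 2) * exp (-(1 / 4) * ‖x‖ ^ 2) := by ring

end Integrability

section IntegrationByParts

variable {V : Type*} [NormedAddCommGroup V] [InnerProductSpace ℝ V]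

lemma hasFDerivAt_exp_neg_sq_norm_div_two (x : V) :
    HasFDerivAt (fun y : V => exp (-‖y‖ ^ 2 / 2)) (-exp (-‖x‖ ^ 2 / 2) • innerSL ℝ x) x := by
  have hexponent : HasFDerivAt (fun y : V => -‖y‖ ^ 2 / 2) (-innerSL ℝ x) x := by
    have h := (hasStrictFDerivAt_norm_sq x).hasFDerivAt.const_mul (-1 / 2 : ℝ)
    rw [show (-1 / 2 : ℝ) • (2 : ℕ) • innerSL ℝ x = -innerSL ℝ x by
      rw [smul_comm, ← smul_assoc]; norm_num] at h
    simpa only [neg_div, neg_mul, one_div, inv_mul_eq_div] using h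
  simpa only [smul_neg, neg_smul] using hexponent.exp

lemma fderiv_exp_neg_sq_norm_div_two_mul_apply {f : V → ℝ} {x : V} (hf : DifferentiableAt ℝ f x)
    (v : V) : fderiv ℝ (fun y => exp (-‖y‖ ^ 2 / 2) * f y) x v =
      exp (-‖x‖ ^ 2 / 2) * (fderiv ℝ f x v - ⟪x, v⟫ * f x) := by
  rw [((hasFDerivAt_exp_neg_sq_norm_div_two x).fun_mul hf.hasFDerivAt).fderiv]
  simp only [add_apply, smul_apply, innerSL_apply_apply, smul_eq_mul]
  ring

variable [FiniteDimensional ℝ V] [MeasurableSpace V] [BorelSpace V]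

theorem integral_exp_neg_sq_norm_div_two_mul_fderiv {f g : V → ℝ} (hf : ContDiff ℝ 1 f)
    (hg : ContDiff ℝ 1 g) (hf₀ : PolyBounded f) (hf₁ : PolyBounded (fderiv ℝ f))
    (hg₀ : PolyBounded g) (hg₁ : PolyBounded (fderiv ℝ g)) (v : V) :
    ∫ x, exp (-‖x‖ ^ 2 / 2) * (f x * fderiv ℝ g x v) =
      ∫ x, exp (-‖x‖ ^ 2 / 2) * ((⟪x, v⟫ * f x - fderiv ℝ f x v) * g x) := by
  have hdf : Differentiable ℝ f := hf.differentiable one_ne_zero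
  have hcf' : Continuous (fderiv ℝ f · v) :=
    (hf.continuous_fderiv one_ne_zero).clm_apply continuous_const
  have hcg' : Continuous (fderiv ℝ g · v) :=
    (hg.continuous_fderiv one_ne_zero).clm_apply continuous_const
  set w : V → ℝ := fun x => exp (-‖x‖ ^ 2 / 2)
  have hdw : Differentiable ℝ w := fun x =>
    (hasFDerivAt_exp_neg_sq_norm_div_two x).differentiableAt
  have hw' : ∀ x, fderiv ℝ (fun y => w y * f y) x v = -(w x * (⟪x, v⟫ * f x - fderiv ℝ f x v)) :=
    fun x => by rw [fderiv_exp_neg_sq_norm_div_two_mul_apply (hdf x)]; ring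
  have hibp := integral_mul_fderiv_eq_neg_fderiv_mul_of_integrable (μ := volume) (v := v)
    (f := fun y => w y * f y) (g := g) ?_ ?_ ?_ (fun x _ => (hdw x).mul (hdf x))
    (fun x _ => hg.differentiable one_ne_zero x)
  · simpa only [hw', neg_mul, integral_neg, neg_neg, mul_assoc] using hibp
  · simp only [hw', neg_mul, mul_assoc]
    refine (((polyBounded_inner_right v).mul hf₀).sub (hf₁.clm_apply v)).mul hg₀
      |>.integrable_exp_neg_sq_norm_mul ?_ |>.neg
    exact (((continuous_id.inner continuous_const).mul hf.continuous).sub hcf').mul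
      hg.continuous |>.aestronglyMeasurable
  · simp only [mul_assoc]
    exact (hf₀.mul (hg₁.clm_apply v)).integrable_exp_neg_sq_norm_mul
      (hf.continuous.mul hcg').aestronglyMeasurable
  · simp only [mul_assoc]
    exact (hf₀.mul hg₀).integrable_exp_neg_sq_norm_mul
      (hf.continuous.mul hg.continuous).aestronglyMeasurable

end IntegrationByParts

lemma integral_gaussianMeasure {n : ℕ} (F : EuclideanSpace ℝ (Fin n) → ℝ) :
    ∫ x, F x ∂gaussianMeasure n = (2 * π) ^ (-(n : ℝ) / 2) * ∫ x, exp (-‖x‖ ^ 2 / 2) * F x := by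
  rw [gaussianMeasure, integral_withDensity_eq_integral_toReal_smul (by fun_prop)
    (.of_forall fun _ => ENNReal.ofReal_lt_top), ← integral_const_mul]
  refine integral_congr_ae (.of_forall fun x => ?_)
  dsimp only
  rw [ENNReal.toReal_ofReal (by positivity), smul_eq_mul, mul_assoc]

lemma CPoly.polyBounded {k n : ℕ} {f : EuclideanSpace ℝ (Fin n) → ℝ} (hf : CPoly k n f) :
    PolyBounded f := by
  simpa only [PolyBounded, norm_iteratedFDeriv_zero] using hf.2 0 k.zero_le

lemma CPoly.polyBounded_fderiv {k n : ℕ} {f : EuclideanSpace ℝ (Fin n) → ℝ} (hf : CPoly k n f)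
    (hk : 1 ≤ k) : PolyBounded (fderiv ℝ f) := by
  simpa only [PolyBounded, norm_iteratedFDeriv_one] using hf.2 1 hk

/-- Gaussian integration by parts:
`∫ f ∂ᵢg dγ = ∫ (δᵢf) g dγ` with `δᵢ f(x) = xᵢ f(x) − ∂ᵢ f(x)`. -/
theorem gaussian_integration_by_parts (n : ℕ) (f g : EuclideanSpace ℝ (Fin n) → ℝ)
    (hf : CPoly 1 n f) (hg : CPoly 1 n g) (i : Fin n) :
    ∫ x, f x * partialDeriv i g x ∂gaussianMeasure n =
      ∫ x, (x i * f x - partialDeriv i f x) * g x ∂gaussianMeasure n := by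
  have hibp := integral_exp_neg_sq_norm_div_two_mul_fderiv hf.1 hg.1 hf.polyBounded
    (hf.polyBounded_fderiv le_rfl) hg.polyBounded (hg.polyBounded_fderiv le_rfl)
    (EuclideanSpace.single i 1)
  simp only [EuclideanSpace.inner_single_right, one_mul, conj_trivial] at hibp
  rw [integral_gaussianMeasure, integral_gaussianMeasure]
  exact congrArg _ hibp
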